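/- Work over the alphabet {a, b} and the tagged alphabet {a, b} × {1, 2}, and let tag₁ and tag₂ be the letter-to-letter maps on words sending each letter x to (x, 1), respectively (x, 2). Let K₀ be the set of words over {a, b} × {1, 2} that are concatenations of the two-letter blocks (a,1)(a,2) and (b,1)(b,2). Then for every word w over {a, b} and every tuple (u₁, …, uₘ) of words over {a, b}: w ∈ ⧢(u₁, …, uₘ) if and only if ⧢(tag₁(w), tag₂(u₁), …, tag₂(uₘ)) ∩ K₀ ≠ ∅. -/

import Mathlib

/-!
Letters tagged `1` and letters tagged `2` can be told apart, so a word lies in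
`⧢(tag₁ w, tag₂ u₁, …, tag₂ uₘ)` exactly when its tag-`1` letters spell `tag₁ w` and its tag-`2`
letters form a word of `⧢(tag₂ u₁, …, tag₂ uₘ)`. A word of `K₀` carries the same underlying word
on both tags, so such a word can lie in `K₀` only if `w ∈ ⧢(u₁, …, uₘ)`; conversely, if it does,
`(x₁,1)(x₁,2)(x₂,1)(x₂,2)⋯` built from the letters of `w` is a witness.
-/

namespace CTS

/-- Shuffle of two words: `ε ⧢ v = {v}`, `u ⧢ ε = {u}`,
`(x·u) ⧢ (y·v) = x·(u ⧢ y·v) ∪ y·(x·u ⧢ v)`. -/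
def shuffle {α : Type*} : List α → List α → Set (List α)
  | [], v => {v}
  | u, [] => {u}
  | x :: u, y :: v =>
      (List.cons x) '' shuffle u (y :: v) ∪ (List.cons y) '' shuffle (x :: u) v
  termination_by u v => u.length + v.length

/-- Shuffle of a tuple of words: `⧢() = {ε}` and
`⧢(w₁, …, wₘ₊₁) = ⋃_{v ∈ ⧢(w₁, …, wₘ)} v ⧢ wₘ₊₁`. -/
def Shuffles {α : Type*} (ws : List (List α)) : Set (List α) :=
  ws.foldl (fun S w => ⋃ v ∈ S, shuffle v w) {[]}

/-- `wpow u n` is the `n`-fold concatenation `u^n` of the word `u`. -/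
def wpow {α : Type*} (u : List α) : ℕ → List α
  | 0 => []
  | n + 1 => u ++ wpow u n

/-- `star u = {u^n : n ∈ ℕ}`. -/
def star {α : Type*} (u : List α) : Set (List α) := {w | ∃ n, w = wpow u n}

/-- Words that are (possibly empty) concatenations of blocks from `S`. -/
def ConcatsOf {α : Type*} (S : Set (List α)) : Set (List α) :=
  {w | ∃ L : List (List α), (∀ u ∈ L, u ∈ S) ∧ w = L.flatten}

/-- The two-letter alphabet `{a, b}`. -/
inductive AB : Type
  | a : AB
  | b : AB
deriving DecidableEq

/-- Tag each letter of a word with subscript 1 (represented by `0 : Fin 2`). -/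
def tag1 (w : List AB) : List (AB × Fin 2) := w.map (fun x => (x, (0 : Fin 2)))

/-- Tag each letter of a word with subscript 2 (represented by `1 : Fin 2`). -/
def tag2 (w : List AB) : List (AB × Fin 2) := w.map (fun x => (x, (1 : Fin 2)))

/-- `K₀`: concatenations of the blocks `(a,1)(a,2)` and `(b,1)(b,2)`. -/
def K0 : Set (List (AB × Fin 2)) :=
  ConcatsOf {[(AB.a, (0 : Fin 2)), (AB.a, (1 : Fin 2))],
             [(AB.b, (0 : Fin 2)), (AB.b, (1 : Fin 2))]}

section Shuffle

variable {α β : Type*}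

lemma shuffle_nil_left (v : List α) : shuffle [] v = {v} := by
  cases v <;> simp [shuffle]

lemma shuffle_nil_right (u : List α) : shuffle u [] = {u} := by
  cases u <;> simp [shuffle]

lemma shuffle_cons_cons (x y : α) (u v : List α) :
    shuffle (x :: u) (y :: v)
      = List.cons x '' shuffle u (y :: v) ∪ List.cons y '' shuffle (x :: u) v := by
  rw [shuffle]

lemma eq_nil_of_nil_mem_shuffle {u v : List α} (h : [] ∈ shuffle u v) : u = [] ∧ v = [] := by
  cases u with
  | nil => simpa [shuffle_nil_left, eq_comm] using h
  | cons x u =>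
    cases v with
    | nil => simp [shuffle_nil_right] at h
    | cons y v => simp [shuffle_cons_cons] at h

lemma cons_mem_shuffle_cons_left {z u v : List α} (x : α) (h : z ∈ shuffle u v) :
    x :: z ∈ shuffle (x :: u) v := by
  cases v with
  | nil => simp_all [shuffle_nil_right]
  | cons y v => rw [shuffle_cons_cons]; exact Or.inl ⟨z, h, rfl⟩

lemma cons_mem_shuffle_cons_right {z u v : List α} (y : α) (h : z ∈ shuffle u v) :
    y :: z ∈ shuffle u (y :: v) := by
  cases u with
  | nil => simp_all [shuffle_nil_left]
  | cons x u => rw [shuffle_cons_cons]; exact Or.inr ⟨z, h, rfl⟩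

lemma cons_mem_shuffle {c : α} {s u v : List α} (h : c :: s ∈ shuffle u v) :
    (∃ u', u = c :: u' ∧ s ∈ shuffle u' v) ∨ (∃ v', v = c :: v' ∧ s ∈ shuffle u v') := by
  cases u with
  | nil =>
    obtain rfl : v = c :: s := by simpa [shuffle_nil_left, eq_comm] using h
    exact Or.inr ⟨s, rfl, by simp [shuffle_nil_left]⟩
  | cons x u =>
    cases v with
    | nil =>
      obtain ⟨rfl, rfl⟩ : c = x ∧ s = u := by simpa [shuffle_nil_right] using h
      exact Or.inl ⟨s, rfl, by simp [shuffle_nil_right]⟩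
    | cons y v =>
      rw [shuffle_cons_cons] at h
      rcases h with ⟨s', hs', hx⟩ | ⟨s', hs', hy⟩
      · obtain ⟨rfl, rfl⟩ := List.cons.inj hx
        exact Or.inl ⟨u, rfl, hs'⟩
      · obtain ⟨rfl, rfl⟩ := List.cons.inj hy
        exact Or.inr ⟨v, rfl, hs'⟩

lemma filterMap_mem_shuffle (f : α → Option β) {z u v : List α} (h : z ∈ shuffle u v) :
    z.filterMap f ∈ shuffle (u.filterMap f) (v.filterMap f) := by
  induction z generalizing u v with
  | nil =>
    obtain ⟨rfl, rfl⟩ := eq_nil_of_nil_mem_shuffle h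
    simp [shuffle_nil_left]
  | cons c z ih =>
    rcases cons_mem_shuffle h with ⟨u', rfl, hs⟩ | ⟨v', rfl, hs⟩ <;> cases hc : f c
    case inl.none | inr.none => simpa [List.filterMap_cons, hc] using ih hs
    case inl.some b => simpa [List.filterMap_cons, hc] using cons_mem_shuffle_cons_left b (ih hs)
    case inr.some b => simpa [List.filterMap_cons, hc] using cons_mem_shuffle_cons_right b (ih hs)

lemma exists_mem_shuffle_of_filter_mem_shuffle {p : α → Bool} {t : List α}
    (ht : ∀ c ∈ t, p c = false) {z y : List α} (h : z.filter (!p ·) ∈ shuffle y t) :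
    ∃ v, v.filter p = z.filter p ∧ v.filter (!p ·) = y ∧ z ∈ shuffle v t := by
  induction z generalizing y t with
  | nil =>
    obtain ⟨rfl, rfl⟩ := eq_nil_of_nil_mem_shuffle h
    exact ⟨[], rfl, rfl, by simp [shuffle_nil_left]⟩
  | cons c z ih =>
    by_cases hc : p c
    · obtain ⟨v, hv, hv', hz⟩ := ih ht (by simpa [hc] using h)
      exact ⟨c :: v, by simp [hc, hv], by simp [hc, hv'], cons_mem_shuffle_cons_left c hz⟩
    · rcases cons_mem_shuffle (by simpa [hc] using h) with ⟨y', rfl, hs⟩ | ⟨t', rfl, hs⟩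
      · obtain ⟨v, hv, hv', hz⟩ := ih ht hs
        exact ⟨c :: v, by simp [hc, hv], by simp [hc, hv'], cons_mem_shuffle_cons_left c hz⟩
      · obtain ⟨v, hv, hv', hz⟩ := ih (fun d hd => ht d (.tail _ hd)) hs
        exact ⟨v, by simp [hc, hv], hv', cons_mem_shuffle_cons_right c hz⟩

@[simp]
lemma Shuffles_nil : Shuffles ([] : List (List α)) = {[]} := rfl

lemma Shuffles_append_singleton (ws : List (List α)) (t : List α) :
    Shuffles (ws ++ [t]) = ⋃ v ∈ Shuffles ws, shuffle v t := by
  simp [Shuffles, List.foldl_append]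

lemma Shuffles_singleton (u : List α) : Shuffles [u] = {u} := by
  simpa [shuffle_nil_left] using Shuffles_append_singleton [] u

lemma map_mem_Shuffles (f : α → β) {ws : List (List α)} {z : List α} (hz : z ∈ Shuffles ws) :
    z.map f ∈ Shuffles (ws.map (List.map f)) := by
  induction ws using List.reverseRecOn generalizing z with
  | nil => simp_all
  | append_singleton ws t ih =>
    simp only [Shuffles_append_singleton, List.map_append, List.map_singleton,
      Set.mem_iUnion] at hz ⊢
    obtain ⟨v, hv, hzv⟩ := hz
    exact ⟨v.map f, ih hv, List.filterMap_eq_map ▸ filterMap_mem_shuffle (some ∘ f) hzv⟩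

lemma mem_Shuffles_cons_iff {p : α → Bool} {u : List α} (hu : ∀ c ∈ u, p c = true)
    {ws : List (List α)} (hws : ∀ t ∈ ws, ∀ c ∈ t, p c = false) {z : List α} :
    z ∈ Shuffles (u :: ws) ↔ z.filter p = u ∧ z.filter (!p ·) ∈ Shuffles ws := by
  induction ws using List.reverseRecOn generalizing z with
  | nil =>
    simp only [Shuffles_singleton, Shuffles_nil, Set.mem_singleton_iff, List.filter_eq_nil_iff,
      Bool.not_eq_true', Bool.not_eq_false]
    constructor
    · rintro rfl
      exact ⟨List.filter_eq_self.2 hu, hu⟩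
    · rintro ⟨hz, hp⟩
      rwa [List.filter_eq_self.2 hp] at hz
  | append_singleton ws t ih =>
    have ht : ∀ c ∈ t, p c = false := hws t (by simp)
    have ih := @ih (fun t' ht' => hws t' (by simp [ht']))
    rw [← List.cons_append, Shuffles_append_singleton, Shuffles_append_singleton]
    simp only [Set.mem_iUnion, ih]
    constructor
    · rintro ⟨v, ⟨hv, hv'⟩, hz⟩
      have hzp := filterMap_mem_shuffle (Option.guard (p ·)) hz
      have hznp := filterMap_mem_shuffle (Option.guard (!p ·)) hz
      have htp : t.filter p = [] := List.filter_eq_nil_iff.2 (by simpa using ht)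
      have htnp : t.filter (!p ·) = t := List.filter_eq_self.2 (by simpa using ht)
      simp only [List.filterMap_eq_filter, htp, htnp, shuffle_nil_right] at hzp hznp
      exact ⟨hzp.trans hv, _, hv', hznp⟩
    · rintro ⟨hz, y, hy, hzy⟩
      obtain ⟨v, hv, rfl, hzv⟩ := exists_mem_shuffle_of_filter_mem_shuffle ht hzy
      exact ⟨v, ⟨hv.trans hz, hy⟩, hzv⟩

end Shuffle

section Tagged

def isTag1 (c : AB × Fin 2) : Bool := decide (c.2 = 0)

def interleave (w : List AB) : List (AB × Fin 2) := w.flatMap fun x => [(x, 0), (x, 1)]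

lemma isTag1_of_mem_tag1 (w : List AB) : ∀ c ∈ tag1 w, isTag1 c = true := by
  simp [tag1, isTag1]

lemma not_isTag1_of_mem_tag2 (us : List (List AB)) :
    ∀ t ∈ us.map tag2, ∀ c ∈ t, isTag1 c = false := by
  simp [tag2, isTag1]

lemma map_fst_tag1 (w : List AB) : (tag1 w).map Prod.fst = w := by
  simp [tag1, Function.comp_def]

lemma map_map_fst_tag2 (us : List (List AB)) : (us.map tag2).map (List.map Prod.fst) = us := by
  simp [tag2, Function.comp_def]

lemma filter_isTag1_interleave (w : List AB) : (interleave w).filter isTag1 = tag1 w := by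
  induction w with
  | nil => rfl
  | cons x w ih => simpa [interleave, tag1, isTag1, List.filter_cons] using ih

lemma filter_not_isTag1_interleave (w : List AB) :
    (interleave w).filter (!isTag1 ·) = tag2 w := by
  induction w with
  | nil => rfl
  | cons x w ih => simpa [interleave, tag2, isTag1, List.filter_cons] using ih

lemma interleave_mem_K0 (w : List AB) : interleave w ∈ K0 := by
  refine ⟨w.map fun x => [(x, 0), (x, 1)], ?_, rfl⟩
  simp only [List.mem_map]
  rintro _ ⟨(_ | _), _, rfl⟩
  exacts [Or.inl rfl, Or.inr rfl]

lemma map_fst_filter_isTag1_of_mem_K0 {z : List (AB × Fin 2)} (hz : z ∈ K0) :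
    (z.filter isTag1).map Prod.fst = (z.filter (!isTag1 ·)).map Prod.fst := by
  obtain ⟨L, hL, rfl⟩ := hz
  induction L with
  | nil => rfl
  | cons u L ih =>
    rcases hL u (.head _) with rfl | rfl <;>
      simpa [List.filter_cons, isTag1] using ih fun u hu => hL u (.tail _ hu)

end Tagged

/-- `w ∈ ⧢(u₁, …, uₘ)` iff `⧢(tag₁(w), tag₂(u₁), …, tag₂(uₘ)) ∩ K₀ ≠ ∅`. -/
theorem stmt1 (w : List AB) (us : List (List AB)) :
    w ∈ Shuffles us ↔ (Shuffles (tag1 w :: us.map tag2) ∩ K0).Nonempty := by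
  have hmem {z} := mem_Shuffles_cons_iff (z := z) (isTag1_of_mem_tag1 w)
    (not_isTag1_of_mem_tag2 us)
  constructor
  · intro hw
    refine ⟨interleave w, hmem.2 ⟨filter_isTag1_interleave w, ?_⟩, interleave_mem_K0 w⟩
    rw [filter_not_isTag1_interleave]
    exact map_mem_Shuffles _ hw
  · rintro ⟨z, hz, hzK⟩
    obtain ⟨hz₁, hz₂⟩ := hmem.1 hz
    have := map_mem_Shuffles Prod.fst hz₂
    rwa [map_map_fst_tag2, ← map_fst_filter_isTag1_of_mem_K0 hzK, hz₁, map_fst_tag1] at this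

end CTS
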